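/- Suppose every bounded operator from A to A* is weakly compact and A** (with the first Arens product) is approximately weakly amenable; then A is approximately weakly amenable. -/

import Mathlib

open ContinuousLinearMap Filter Topology

open ContinuousLinearMap Filter Topology

/-- A Banach `A`-bimodule: a complete normed `ℂ`-space with commuting continuous
left and right `A`-actions, jointly bounded and bilinear. -/
structure BBimod (A : Type) [NonUnitalNormedRing A] [NormedSpace ℂ A] where
  carrier : Type
  [grp : NormedAddCommGroup carrier]
  [mod : NormedSpace ℂ carrier]
  [complete : CompleteSpace carrier]
  lsmul : A → carrier →L[ℂ] carrier
  rsmul : A → carrier →L[ℂ] carrier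
  lsmul_add : ∀ a b, lsmul (a + b) = lsmul a + lsmul b
  rsmul_add : ∀ a b, rsmul (a + b) = rsmul a + rsmul b
  lsmul_smul : ∀ (c : ℂ) (a), lsmul (c • a) = c • lsmul a
  rsmul_smul : ∀ (c : ℂ) (a), rsmul (c • a) = c • rsmul a
  lsmul_mul : ∀ a b, lsmul (a * b) = (lsmul a).comp (lsmul b)
  rsmul_mul : ∀ a b, rsmul (a * b) = (rsmul b).comp (rsmul a)
  lsmul_rsmul : ∀ a b, (lsmul a).comp (rsmul b) = (rsmul b).comp (lsmul a)
  bound : ∃ C : ℝ, ∀ a, ‖lsmul a‖ ≤ C * ‖a‖ ∧ ‖rsmul a‖ ≤ C * ‖a‖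

attribute [instance] BBimod.grp BBimod.mod BBimod.complete

variable {A : Type} [NonUnitalNormedRing A] [NormedSpace ℂ A]

/-- The dual of a Banach bimodule, with the canonical dual actions
`⟨u, Λ·a⟩ = ⟨a·u, Λ⟩` and `⟨u, a·Λ⟩ = ⟨u·a, Λ⟩`. -/
noncomputable def BBimod.dual (M : BBimod A) : BBimod A where
  carrier := M.carrier →L[ℂ] ℂ
  lsmul a := (compL ℂ M.carrier M.carrier ℂ).flip (M.rsmul a)
  rsmul a := (compL ℂ M.carrier M.carrier ℂ).flip (M.lsmul a)
  lsmul_add a b := by ext Λ x; simp [M.rsmul_add]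
  rsmul_add a b := by ext Λ x; simp [M.lsmul_add]
  lsmul_smul c a := by ext Λ x; simp [M.rsmul_smul]
  rsmul_smul c a := by ext Λ x; simp [M.lsmul_smul]
  lsmul_mul a b := by ext Λ x; simp [M.rsmul_mul]
  rsmul_mul a b := by ext Λ x; simp [M.lsmul_mul]
  lsmul_rsmul a b := by
    ext Λ x
    have h : M.lsmul b (M.rsmul a x) = M.rsmul a (M.lsmul b x) := by
      have := congrArg (fun T : M.carrier →L[ℂ] M.carrier => T x) (M.lsmul_rsmul b a)
      simpa using this
    simp [h]
  bound := by
    obtain ⟨C, hC⟩ := M.bound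
    refine ⟨C, fun a => ⟨?_, ?_⟩⟩
    · refine opNorm_le_bound _ ?_ fun Λ => ?_
      · exact le_trans (norm_nonneg _) (hC a).2
      · calc ‖Λ.comp (M.rsmul a)‖ ≤ ‖Λ‖ * ‖M.rsmul a‖ := opNorm_comp_le _ _
          _ ≤ (C * ‖a‖) * ‖Λ‖ := by
              rw [mul_comm]
              exact mul_le_mul_of_nonneg_right (hC a).2 (norm_nonneg _)
    · refine opNorm_le_bound _ ?_ fun Λ => ?_
      · exact le_trans (norm_nonneg _) (hC a).1
      · calc ‖Λ.comp (M.lsmul a)‖ ≤ ‖Λ‖ * ‖M.lsmul a‖ := opNorm_comp_le _ _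
          _ ≤ (C * ‖a‖) * ‖Λ‖ := by
              rw [mul_comm]
              exact mul_le_mul_of_nonneg_right (hC a).1 (norm_nonneg _)

variable (A) [IsScalarTower ℂ A A] [SMulCommClass ℂ A A] [CompleteSpace A]

/-- `A` as a Banach bimodule over itself. -/
noncomputable def BBimod.base : BBimod A where
  carrier := A
  lsmul a := ContinuousLinearMap.mul ℂ A a
  rsmul a := (ContinuousLinearMap.mul ℂ A).flip a
  lsmul_add a b := by ext x; simp [add_mul]
  rsmul_add a b := by ext x; simp [mul_add]
  lsmul_smul c a := by ext x; simp [smul_mul_assoc]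
  rsmul_smul c a := by ext x; simp [mul_smul_comm]
  lsmul_mul a b := by ext x; simp [mul_assoc]
  rsmul_mul a b := by ext x; simp [mul_assoc]
  lsmul_rsmul a b := by ext x; simp [mul_assoc]
  bound := by
    refine ⟨1, fun a => ⟨?_, ?_⟩⟩
    · simpa using ContinuousLinearMap.opNorm_mul_apply_le ℂ A a
    · refine le_trans (opNorm_le_bound _ (norm_nonneg a) fun x => ?_) (by simp)
      simpa [mul_comm] using norm_mul_le x a


/-- The `n`-th dual `A^(n)` of `A` as a Banach `A`-bimodule. -/
noncomputable def iterDual : ℕ → BBimod A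
  | 0 => BBimod.base A
  | n + 1 => (iterDual n).dual

variable {A}

/-- `D` is a derivation from `A` into the Banach bimodule `M`. -/
def IsDerivation (M : BBimod A) (D : A →L[ℂ] M.carrier) : Prop :=
  ∀ a b : A, D (a * b) = M.lsmul a (D b) + M.rsmul b (D a)

/-- `D` is an inner derivation. -/
def IsInner (M : BBimod A) (D : A →L[ℂ] M.carrier) : Prop :=
  ∃ x : M.carrier, ∀ a : A, D a = M.lsmul a x - M.rsmul a x

/-- `D` is approximately inner: there is a net `(x_i)` in `M` with
`D a = lim_i (a·x_i − x_i·a)` for every `a`. -/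
def IsApproxInner (M : BBimod A) (D : A →L[ℂ] M.carrier) : Prop :=
  ∃ (ι : Type) (l : Filter ι) (x : ι → M.carrier), l.NeBot ∧
    ∀ a : A, Tendsto (fun i => M.lsmul a (x i) - M.rsmul a (x i)) l (𝓝 (D a))

variable (A)

/-- `A` is weakly amenable. -/
def WeaklyAmenable : Prop :=
  ∀ D : A →L[ℂ] (iterDual A 1).carrier, IsDerivation (iterDual A 1) D → IsInner (iterDual A 1) D

/-- `A` is approximately `n`-weakly amenable. -/
def ApproxNWeaklyAmenable (n : ℕ) : Prop :=
  ∀ D : A →L[ℂ] (iterDual A n).carrier,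
    IsDerivation (iterDual A n) D → IsApproxInner (iterDual A n) D

/-- `A` is `n`-weakly amenable. -/
def NWeaklyAmenable (n : ℕ) : Prop :=
  ∀ D : A →L[ℂ] (iterDual A n).carrier,
    IsDerivation (iterDual A n) D → IsInner (iterDual A n) D

/-- `A` is approximately weakly amenable. -/
def ApproxWeaklyAmenable : Prop := ApproxNWeaklyAmenable A 1

/-- `A` is approximately amenable: every continuous derivation into the dual of a
Banach `A`-bimodule is approximately inner. -/
def ApproxAmenable : Prop :=
  ∀ (X : BBimod A) (D : A →L[ℂ] X.dual.carrier), IsDerivation X.dual D → IsApproxInner X.dual D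

section SecondDual
variable (A : Type) [NonUnitalNormedRing A] [NormedSpace ℂ A]
  [IsScalarTower ℂ A A] [SMulCommClass ℂ A A]

/-- The map `f ↦ n □ f` entering the definition of the first Arens product. -/
noncomputable def arensAux (n : (A →L[ℂ] ℂ) →L[ℂ] ℂ) :
    (A →L[ℂ] ℂ) →L[ℂ] (A →L[ℂ] ℂ) :=
  (compL ℂ A (A →L[ℂ] ℂ) ℂ n).comp
    (((compL ℂ A (A →L[ℂ] A) (A →L[ℂ] ℂ)).flip (ContinuousLinearMap.mul ℂ A)).comp
      (compL ℂ A A ℂ))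

/-- The first Arens product `m □ n` on the second dual of `A`. -/
noncomputable def arens (m n : (A →L[ℂ] ℂ) →L[ℂ] ℂ) : (A →L[ℂ] ℂ) →L[ℂ] ℂ :=
  m.comp (arensAux A n)

variable {A}

lemma arens_add_left (m n p : (A →L[ℂ] ℂ) →L[ℂ] ℂ) :
    arens A (m + n) p = arens A m p + arens A n p := by
  ext f; simp [arens]

lemma arens_add_right (m n p : (A →L[ℂ] ℂ) →L[ℂ] ℂ) :
    arens A m (n + p) = arens A m n + arens A m p := by
  ext f; simp [arens, arensAux, map_add]

lemma arens_zero_left (m : (A →L[ℂ] ℂ) →L[ℂ] ℂ) : arens A 0 m = 0 := by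
  ext f; simp [arens]

lemma arens_zero_right (m : (A →L[ℂ] ℂ) →L[ℂ] ℂ) : arens A m 0 = 0 := by
  ext f
  have h0 : arensAux A (0 : (A →L[ℂ] ℂ) →L[ℂ] ℂ) f = 0 := by ext a; rfl
  show m (arensAux A 0 f) = 0
  rw [h0, map_zero]

lemma arens_smul_left (c : ℂ) (m n : (A →L[ℂ] ℂ) →L[ℂ] ℂ) :
    arens A (c • m) n = c • arens A m n := by
  ext f; simp [arens]

lemma arens_smul_right (c : ℂ) (m n : (A →L[ℂ] ℂ) →L[ℂ] ℂ) :
    arens A m (c • n) = c • arens A m n := by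
  ext f
  have hs : arensAux A (c • n) f = c • arensAux A n f := by ext a; rfl
  show m (arensAux A (c • n) f) = c • m (arensAux A n f)
  rw [hs, map_smul]

lemma arens_assoc (m n p : (A →L[ℂ] ℂ) →L[ℂ] ℂ) :
    arens A (arens A m n) p = arens A m (arens A n p) := by
  ext f
  show m (arensAux A n (arensAux A p f)) = m (arensAux A (arens A n p) f)
  congr 1
  ext a
  show n ((arensAux A p f).comp (ContinuousLinearMap.mul ℂ A a)) =
    n (arensAux A p (f.comp (ContinuousLinearMap.mul ℂ A a)))
  congr 1
  ext b
  show p (f.comp (ContinuousLinearMap.mul ℂ A (a * b))) =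
    p ((f.comp (ContinuousLinearMap.mul ℂ A a)).comp (ContinuousLinearMap.mul ℂ A b))
  congr 1
  ext c
  exact congrArg f (mul_assoc a b c)

lemma arens_norm (m n : (A →L[ℂ] ℂ) →L[ℂ] ℂ) : ‖arens A m n‖ ≤ ‖m‖ * ‖n‖ := by
  have hAux : ‖arensAux A n‖ ≤ ‖n‖ := by
    refine opNorm_le_bound _ (norm_nonneg n) fun f => ?_
    have hHf : ‖(((compL ℂ A (A →L[ℂ] A) (A →L[ℂ] ℂ)).flip
        (ContinuousLinearMap.mul ℂ A)).comp (compL ℂ A A ℂ)) f‖ ≤ ‖f‖ := by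
      refine opNorm_le_bound _ (norm_nonneg f) fun a => ?_
      show ‖f.comp (ContinuousLinearMap.mul ℂ A a)‖ ≤ ‖f‖ * ‖a‖
      calc ‖f.comp (ContinuousLinearMap.mul ℂ A a)‖
          ≤ ‖f‖ * ‖ContinuousLinearMap.mul ℂ A a‖ := opNorm_comp_le _ _
        _ ≤ ‖f‖ * ‖a‖ :=
            mul_le_mul_of_nonneg_left (ContinuousLinearMap.opNorm_mul_apply_le ℂ A a)
              (norm_nonneg f)
    calc ‖arensAux A n f‖
        ≤ ‖n‖ * ‖(((compL ℂ A (A →L[ℂ] A) (A →L[ℂ] ℂ)).flip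
            (ContinuousLinearMap.mul ℂ A)).comp (compL ℂ A A ℂ)) f‖ := opNorm_comp_le _ _
      _ ≤ ‖n‖ * ‖f‖ := mul_le_mul_of_nonneg_left hHf (norm_nonneg n)
  calc ‖arens A m n‖ ≤ ‖m‖ * ‖arensAux A n‖ := opNorm_comp_le _ _
    _ ≤ ‖m‖ * ‖n‖ := mul_le_mul_of_nonneg_left hAux (norm_nonneg m)

variable (A)

/-- The second dual `A**` of `A`, as a type synonym, equipped with the
first Arens product. -/
def SecondDual : Type := (A →L[ℂ] ℂ) →L[ℂ] ℂ

noncomputable instance : NormedAddCommGroup (SecondDual A) :=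
  (inferInstance : NormedAddCommGroup ((A →L[ℂ] ℂ) →L[ℂ] ℂ))

noncomputable instance : NonUnitalNormedRing (SecondDual A) :=
  { (inferInstance : NormedAddCommGroup (SecondDual A)) with
    mul := arens A
    left_distrib := fun m n p => arens_add_right m n p
    right_distrib := fun m n p => arens_add_left m n p
    zero_mul := fun m => arens_zero_left m
    mul_zero := fun m => arens_zero_right m
    mul_assoc := fun m n p => arens_assoc m n p
    norm_mul_le := fun m n => arens_norm m n }

noncomputable instance : NormedSpace ℂ (SecondDual A) :=
  (inferInstance : NormedSpace ℂ ((A →L[ℂ] ℂ) →L[ℂ] ℂ))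

instance : CompleteSpace (SecondDual A) :=
  (inferInstance : CompleteSpace ((A →L[ℂ] ℂ) →L[ℂ] ℂ))

instance : IsScalarTower ℂ (SecondDual A) (SecondDual A) :=
  ⟨fun c m n => arens_smul_left c m n⟩

instance : SMulCommClass ℂ (SecondDual A) (SecondDual A) :=
  ⟨fun c m n => (arens_smul_right c m n).symm⟩

/-- The canonical embedding of `A` into its second dual. -/
noncomputable def canEmb : A →L[ℂ] SecondDual A := ContinuousLinearMap.apply ℂ ℂ

end SecondDual

/-- A bounded operator is weakly compact if the closure of the image of the closed
unit ball is compact in the weak topology. -/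
def IsWeaklyCompactOp {X Y : Type} [NormedAddCommGroup X] [NormedSpace ℂ X]
    [NormedAddCommGroup Y] [NormedSpace ℂ Y] (T : X →L[ℂ] Y) : Prop :=
  IsCompact (closure ((toWeakSpace ℂ Y) '' (T '' Metric.closedBall 0 1)))

/-!
Gantmacher's argument: if `T : X → Y` is weakly compact and `m ∈ X**`, take by Goldstine an
ultrafilter of points `a` of the unit ball converging weak-* to `m / (‖m‖ + 1)`; weak compactness
gives a weak limit `y` of `T a`, and then `m (n ∘ T) = n ((‖m‖ + 1) y)` for every `n ∈ Y*`. For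
`T : X → X*` this says `m (n ∘ T) = n (m ∘ Tᵗ)` for all `m, n ∈ X**`: the two iterated weak-*
limits that define Arens products can be interchanged. Applied to the operators built from a
derivation `D : A → A*` this shows that `D** : A** → A***` is a derivation for the first Arens
product. Approximate weak amenability of `A**` gives a net `ξᵢ` in `A***` with
`D** m = lim (m · ξᵢ - ξᵢ · m)`, and restricting the `ξᵢ` to `A ⊆ A**` implements `D`.
-/

open Metric

section Goldstine

variable {X : Type*} [NormedAddCommGroup X] [NormedSpace ℂ X]

theorem ContinuousLinearMap.norm_le_of_forall_re_le {φ : X →L[ℂ] ℂ} {u : ℝ}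
    (h : ∀ a ∈ closedBall (0 : X) 1, (φ a).re ≤ u) : ‖φ‖ ≤ u := by
  have hball : ∀ a ∈ closedBall (0 : X) 1, ‖φ a‖ ≤ u := by
    intro a ha
    set θ : ℂ := Complex.exp (↑(-(φ a).arg) * Complex.I)
    have hθ : ‖θ‖ = 1 := Complex.norm_exp_ofReal_mul_I _
    have hθφ : φ (θ • a) = ‖φ a‖ := by
      rw [map_smul, smul_eq_mul]
      conv_lhs => rw [← Complex.norm_mul_exp_arg_mul_I (φ a)]
      rw [mul_left_comm, ← Complex.exp_add, Complex.ofReal_neg, neg_mul, neg_add_cancel,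
        Complex.exp_zero, mul_one]
    have := h (θ • a) (by simpa [norm_smul, hθ] using ha)
    rwa [hθφ, Complex.ofReal_re] at this
  simpa using opNorm_bound_of_ball_bound one_pos u φ hball

theorem goldstine_of_finite {ι : Type*} [Finite ι] (f : ι → X →L[ℂ] ℂ)
    {m : (X →L[ℂ] ℂ) →L[ℂ] ℂ} (hm : ‖m‖ ≤ 1) :
    (fun i => m (f i)) ∈ closure ((fun a i => f i a) '' closedBall (0 : X) 1) := by
  classical
  have := Fintype.ofFinite ι
  set S : X →L[ℂ] (ι → ℂ) := ContinuousLinearMap.pi f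
  have hconv : Convex ℝ (S '' closedBall 0 1) :=
    (convex_closedBall 0 1).linear_image (S.toLinearMap.restrictScalars ℝ)
  by_contra hm'
  obtain ⟨ψ, u, hψS, hψm⟩ :=
    RCLike.geometric_hahn_banach_closed_point (𝕜 := ℂ) hconv.closure isClosed_closure hm'
  have hψ : ∀ v : ι → ℂ, ψ v = ∑ i, v i * ψ (Pi.single i 1) := fun v => by
    conv_lhs => rw [← Finset.univ_sum_single v]
    simp_rw [map_sum, ← smul_eq_mul, ← map_smul, ← Pi.single_smul, smul_eq_mul, mul_one]
  have hψ_comp : ψ.comp S = ∑ i, ψ (Pi.single i 1) • f i := by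
    ext a
    rw [comp_apply, hψ]
    simp [S, mul_comm]
  have hψ_norm : ‖ψ.comp S‖ ≤ u :=
    norm_le_of_forall_re_le fun a ha => (hψS _ (subset_closure ⟨a, ha, rfl⟩)).le
  have : (ψ fun i => m (f i)).re ≤ u := calc
    (ψ fun i => m (f i)).re = (m (ψ.comp S)).re := by
      simp [hψ_comp, hψ (fun i => m (f i)), mul_comm]
    _ ≤ ‖m (ψ.comp S)‖ := Complex.re_le_norm _
    _ ≤ ‖m‖ * ‖ψ.comp S‖ := m.le_opNorm _
    _ ≤ u := (mul_le_of_le_one_left (norm_nonneg _) hm).trans hψ_norm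
  exact this.not_gt hψm

-- The product topology on `(X →L[ℂ] ℂ) → ℂ` is the weak-* topology of the bidual.
theorem goldstine {m : (X →L[ℂ] ℂ) →L[ℂ] ℂ} (hm : ‖m‖ ≤ 1) :
    (fun f => m f) ∈ closure ((fun a (f : X →L[ℂ] ℂ) => f a) '' closedBall (0 : X) 1) := by
  rw [mem_closure_iff_nhds]
  intro U hU
  rw [nhds_pi, mem_pi] at hU
  obtain ⟨I, hI, t, ht, htU⟩ := hU
  have := hI.to_subtype
  obtain ⟨_, hv, a, ha, rfl⟩ := mem_closure_iff_nhds.mp (goldstine_of_finite (X := X) (↑) hm)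
    (Set.univ.pi fun i : I => t i) (set_pi_mem_nhds Set.finite_univ fun i _ => ht i)
  exact ⟨_, htU fun f hf => hv ⟨f, hf⟩ trivial, a, ha, rfl⟩

end Goldstine

section WeaklyCompact

variable {X Y : Type} [NormedAddCommGroup X] [NormedSpace ℂ X]
  [NormedAddCommGroup Y] [NormedSpace ℂ Y]

theorem IsWeaklyCompactOp.exists_apply_comp_eq_of_norm_le_one {T : X →L[ℂ] Y}
    (hT : IsWeaklyCompactOp T) {m : (X →L[ℂ] ℂ) →L[ℂ] ℂ} (hm : ‖m‖ ≤ 1) :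
    ∃ y : Y, ∀ n : Y →L[ℂ] ℂ, m (n.comp T) = n y := by
  set F : X → (X →L[ℂ] ℂ) → ℂ := fun a f => f a
  set l : Filter X := 𝓟 (closedBall 0 1) ⊓ comap F (𝓝 fun f => m f)
  have : l.NeBot := by
    refine NeBot.of_map (m := F) ?_
    rw [Filter.push_pull, map_principal, inf_comm]
    exact mem_closure_iff_nhdsWithin_neBot.mp (goldstine hm)
  set U := Ultrafilter.of l
  obtain ⟨y, -, hy⟩ := hT.ultrafilter_le_nhds (U.map (toWeakSpace ℂ Y ∘ T)) <| by
    refine le_principal_iff.mpr (mem_map.mpr (mem_of_superset ?_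
      fun a ha => subset_closure ⟨T a, ⟨a, ha, rfl⟩, rfl⟩))
    exact Ultrafilter.of_le l (mem_inf_of_left (mem_principal_self _))
  refine ⟨(toWeakSpace ℂ Y).symm y, fun n =>
    tendsto_nhds_unique (f := fun a => n (T a)) (l := U) ?_ ?_⟩
  · exact ((continuous_apply (n.comp T)).tendsto _).comp
      (tendsto_comap.mono_left ((Ultrafilter.of_le l).trans inf_le_right))
  · exact ((WeakBilin.eval_continuous (topDualPairing ℂ Y).flip n).tendsto y).comp hy

theorem IsWeaklyCompactOp.exists_apply_comp_eq {T : X →L[ℂ] Y} (hT : IsWeaklyCompactOp T)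
    (m : (X →L[ℂ] ℂ) →L[ℂ] ℂ) : ∃ y : Y, ∀ n : Y →L[ℂ] ℂ, m (n.comp T) = n y := by
  set c : ℂ := ((‖m‖ + 1 : ℝ) : ℂ)
  have hc : c ≠ 0 := Complex.ofReal_ne_zero.mpr (by positivity)
  obtain ⟨y, hy⟩ := hT.exists_apply_comp_eq_of_norm_le_one (m := c⁻¹ • m) <| by
    refine (opNorm_smul_le c⁻¹ m).trans ?_
    rw [norm_inv, Complex.norm_real, Real.norm_of_nonneg (by positivity),
      inv_mul_le_one₀ (by positivity)]
    exact le_add_of_nonneg_right zero_le_one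
  refine ⟨c • y, fun n => ?_⟩
  rw [map_smul, ← hy, smul_apply, smul_eq_mul, smul_eq_mul, mul_inv_cancel_left₀ hc]

theorem IsWeaklyCompactOp.apply_comp_eq_apply_comp_flip {T : X →L[ℂ] (X →L[ℂ] ℂ)}
    (hT : IsWeaklyCompactOp T) (m n : (X →L[ℂ] ℂ) →L[ℂ] ℂ) :
    m (n.comp T) = n (m.comp T.flip) := by
  obtain ⟨y, hy⟩ := hT.exists_apply_comp_eq m
  have hy_eq : y = m.comp T.flip := ext fun b => (hy (apply ℂ ℂ b)).symm
  rw [hy, hy_eq]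

end WeaklyCompact

section ArensProduct

variable {A : Type} [NonUnitalNormedRing A] [NormedSpace ℂ A] [IsScalarTower ℂ A A]
  [SMulCommClass ℂ A A]

-- The two module actions of `A` on `A*`: `dualMulRight f a = f · a = f (a * ·)` and
-- `(dualMulRight f).flip a = a · f = f (· * a)`.
noncomputable def dualMulRight (f : A →L[ℂ] ℂ) : A →L[ℂ] (A →L[ℂ] ℂ) :=
  (compL ℂ A A ℂ f).comp (mul ℂ A)

theorem arensAux_apply (n : (A →L[ℂ] ℂ) →L[ℂ] ℂ) (f : A →L[ℂ] ℂ) :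
    arensAux A n f = n.comp (dualMulRight f) :=
  rfl

theorem arens_apply_eq_apply_comp_flip {f : A →L[ℂ] ℂ} (hf : IsWeaklyCompactOp (dualMulRight f))
    (m n : (A →L[ℂ] ℂ) →L[ℂ] ℂ) : arens A m n f = n (m.comp (dualMulRight f).flip) :=
  hf.apply_comp_eq_apply_comp_flip m n

-- The derivation law `D** (m □ n) = m · D** n + D** m · n`, evaluated at `p`.
theorem arens_apply_comp_derivation (hwc : ∀ T : A →L[ℂ] (A →L[ℂ] ℂ), IsWeaklyCompactOp T)
    {D : A →L[ℂ] (A →L[ℂ] ℂ)}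
    (hD : ∀ a b, D (a * b) = (dualMulRight (D b)).flip a + dualMulRight (D a) b)
    (m n p : (A →L[ℂ] ℂ) →L[ℂ] ℂ) :
    arens A m n (p.comp D) = n ((arens A p m).comp D) + m ((arens A n p).comp D) := by
  set Φ := dualMulRight (p.comp D) - (arensAux A p).comp D
  have hΦ : ∀ b, Φ.flip b = p.comp (dualMulRight (D b)).flip := fun b => by
    ext a
    show p (D (a * b)) - p (dualMulRight (D a) b) = p ((dualMulRight (D b)).flip a)
    rw [hD, map_add, add_sub_cancel_right]
  have hsplit : dualMulRight (p.comp D) = Φ + (arensAux A p).comp D := by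
    ext a b
    simp [Φ]
  calc arens A m n (p.comp D)
      = m (n.comp Φ) + m ((arens A n p).comp D) := by
        rw [arens, comp_apply, arensAux_apply, hsplit, comp_add, map_add]
        rfl
    _ = n ((arens A p m).comp D) + m ((arens A n p).comp D) := by
        rw [(hwc Φ).apply_comp_eq_apply_comp_flip]
        congr 2
        ext b
        rw [comp_apply, hΦ, comp_apply, arens_apply_eq_apply_comp_flip (hwc _)]

noncomputable def secondAdjoint (D : A →L[ℂ] (A →L[ℂ] ℂ)) :
    SecondDual A →L[ℂ] (iterDual (SecondDual A) 1).carrier :=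
  (compL ℂ (SecondDual A) (A →L[ℂ] ℂ) ℂ).flip ((compL ℂ A (A →L[ℂ] ℂ) ℂ).flip D)

theorem isDerivation_secondAdjoint [CompleteSpace A]
    (hwc : ∀ T : A →L[ℂ] (A →L[ℂ] ℂ), IsWeaklyCompactOp T)
    {D : A →L[ℂ] (iterDual A 1).carrier} (hD : IsDerivation (iterDual A 1) D) :
    IsDerivation (iterDual (SecondDual A) 1) (secondAdjoint D) := by
  refine fun m n => ext fun p => arens_apply_comp_derivation hwc (fun a b => ext fun c => ?_) m n p
  exact congrArg (fun g : A →L[ℂ] ℂ => g c) (hD a b)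

end ArensProduct

theorem IsApproxInner.of_map {A B : Type} [NonUnitalNormedRing A] [NormedSpace ℂ A]
    [NonUnitalNormedRing B] [NormedSpace ℂ B] {M : BBimod A} {N : BBimod B}
    (φ : A → B) (R : N.carrier →L[ℂ] M.carrier)
    (hl : ∀ a x, R (N.lsmul (φ a) x) = M.lsmul a (R x))
    (hr : ∀ a x, R (N.rsmul (φ a) x) = M.rsmul a (R x))
    {D : A →L[ℂ] M.carrier} {E : B →L[ℂ] N.carrier} (hDE : ∀ a, R (E (φ a)) = D a)
    (hE : IsApproxInner N E) : IsApproxInner M D := by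
  obtain ⟨ι, l, x, hl_ne, hx⟩ := hE
  refine ⟨ι, l, fun i => R (x i), hl_ne, fun a => ?_⟩
  simpa only [Function.comp_def, map_sub, hl, hr, hDE] using
    (R.continuous.tendsto _).comp (hx (φ a))

variable (A : Type) [NonUnitalNormedRing A] [NormedSpace ℂ A]
  [IsScalarTower ℂ A A] [SMulCommClass ℂ A A] [CompleteSpace A]

/-- If every bounded operator `A → A*` is weakly compact and `A**` (first Arens
product) is approximately weakly amenable, then `A` is approximately weakly
amenable. -/
theorem approxWeaklyAmenable_of_secondDual
    (hwc : ∀ T : A →L[ℂ] (A →L[ℂ] ℂ), IsWeaklyCompactOp T)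
    (h : ApproxWeaklyAmenable (SecondDual A)) :
    ApproxWeaklyAmenable A := fun _ hD =>
  (h _ (isDerivation_secondAdjoint hwc hD)).of_map (canEmb A)
    ((compL ℂ A (SecondDual A) ℂ).flip (canEmb A)) (fun _ _ => rfl) (fun _ _ => rfl) fun _ => rfl
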